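/- arXiv:1405.0293 — 3 statements merged into one kernel-verified Lean document; each statement's English description precedes it below -/
import Mathlib

section
/- In any Kripke model and at any world, the formula ◇^p □^q φ ⇒ □^r ◇^s φ is satisfied for all φ and all valuations over a frame (W, R) if and only if the frame satisfies the generalized Church-Rosser condition: ∀w₀ w₁ w₂, (w₀ R^p w₁ ∧ w₀ R^r w₂) → ∃w₃, (w₁ R^q w₃ ∧ w₂ R^s w₃), where R^0 is the identity relation and R^{i+1} = R ∘ R^i. -/
/-! The formula ◇^p □^q φ → □^r ◇^s φ holds at w iff every φ true at all R^q-successors of some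
R^p-successor of w is true at some R^s-successor of every R^r-successor of w. The Church–Rosser
condition makes this true for every φ; conversely, taking for φ the set of R^q-successors of a
given R^p-successor w₁ of w₀ produces the required common successor w₃. -/

def box {W : Type*} (R : W → W → Prop) (φ : W → Prop) (w : W) : Prop :=
  ∀ w', R w w' → φ w'

def dia {W : Type*} (R : W → W → Prop) (φ : W → Prop) (w : W) : Prop :=
  ¬ box R (fun w' => ¬ φ w') w

def boxn {W : Type*} (R : W → W → Prop) : ℕ → (W → Prop) → (W → Prop)
  | 0, φ => φ
  | (i+1), φ => box R (boxn R i φ)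

def dian {W : Type*} (R : W → W → Prop) : ℕ → (W → Prop) → (W → Prop)
  | 0, φ => φ
  | (i+1), φ => dia R (dian R i φ)

def iterR {W : Type*} (R : W → W → Prop) : ℕ → W → W → Prop
  | 0, w, w' => w = w'
  | (i+1), w, w' => ∃ w'', R w w'' ∧ iterR R i w'' w'

section

variable {W : Type*} {R : W → W → Prop}

theorem boxn_iff_forall_iterR {n : ℕ} {φ : W → Prop} {w : W} :
    boxn R n φ w ↔ ∀ w', iterR R n w w' → φ w' := by
  induction n generalizing w with
  | zero => simp [boxn, iterR]
  | succ n ih => simp only [boxn, box, iterR, ih]; aesop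

theorem dian_iff_exists_iterR {n : ℕ} {φ : W → Prop} {w : W} :
    dian R n φ w ↔ ∃ w', iterR R n w w' ∧ φ w' := by
  induction n generalizing w with
  | zero => simp [dian, iterR]
  | succ n ih => simp only [dian, dia, box, iterR, ih]; aesop

end

theorem geach_iff_churchRosser_general {W : Type*} (R : W → W → Prop)
    (p q r s : ℕ) :
    (∀ φ : W → Prop, ∀ w : W, dian R p (boxn R q φ) w → boxn R r (dian R s φ) w) ↔
      (∀ w₀ w₁ w₂, iterR R p w₀ w₁ ∧ iterR R r w₀ w₂ →
        ∃ w₃, iterR R q w₁ w₃ ∧ iterR R s w₂ w₃) := by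
  simp only [boxn_iff_forall_iterR, dian_iff_exists_iterR]
  constructor
  · rintro h w₀ w₁ w₂ ⟨hp, hr⟩
    obtain ⟨w₃, hs, hq⟩ := h (iterR R q w₁) w₀ ⟨w₁, hp, fun _ ↦ id⟩ w₂ hr
    exact ⟨w₃, hq, hs⟩
  · rintro h φ w₀ ⟨w₁, hp, hφ⟩ w₂ hr
    obtain ⟨w₃, hq, hs⟩ := h w₀ w₁ w₂ ⟨hp, hr⟩
    exact ⟨w₃, hs, hφ w₃ hq⟩

theorem geach_iff_churchRosser {W : Type*} [Nonempty W] (R : W → W → Prop)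
    (p q r s : ℕ) :
    (∀ φ : W → Prop, ∀ w : W, dian R p (boxn R q φ) w → boxn R r (dian R s φ) w) ↔
      (∀ w₀ w₁ w₂, iterR R p w₀ w₁ ∧ iterR R r w₀ w₂ →
        ∃ w₃, iterR R q w₁ w₃ ∧ iterR R s w₂ w₃) :=
  geach_iff_churchRosser_general R p q r s
end

section
/- For all natural numbers p, q, r, s, the scheme G^{p,q,r,s} (◇^p □^q φ ⇒ □^r ◇^s φ) is valid on a Kripke frame if and only if the scheme G^{r,s,p,q} (◇^r □^s φ ⇒ □^p ◇^q φ) is valid on that frame. -/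
/-!
Validity of `◇^p □^q φ → □^r ◇^s φ` on a frame is equivalent to the first-order
`(p, q, r, s)`-confluence condition: whenever `w R^p u` and `w R^r v`, some `x` has
`u R^q x` and `v R^s x`. Necessity comes from the valuation `φ := {x | u R^q x}`.
The confluence condition is symmetric under swapping `(p, q)` with `(r, s)`.
-/

section

variable {W : Type*} (R : W → W → Prop)

def GeachConfluent (p q r s : ℕ) : Prop :=
  ∀ w u v : W, iterR R p w u → iterR R r w v → ∃ x, iterR R q u x ∧ iterR R s v x

lemma boxn_iff (n : ℕ) (φ : W → Prop) (w : W) :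
    boxn R n φ w ↔ ∀ u, iterR R n w u → φ u := by
  induction n generalizing w with
  | zero => simp [boxn, iterR]
  | succ i ih =>
    simp only [boxn, box, iterR, ih, forall_exists_index, and_imp]
    grind

lemma dian_iff (n : ℕ) (φ : W → Prop) (w : W) :
    dian R n φ w ↔ ∃ u, iterR R n w u ∧ φ u := by
  induction n generalizing w with
  | zero => simp [dian, iterR]
  | succ i ih =>
    simp only [dian, dia, box, iterR, ih, not_forall, not_not, exists_prop]
    grind

lemma geachConfluent_comm (p q r s : ℕ) :
    GeachConfluent R p q r s ↔ GeachConfluent R r s p q :=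
  ⟨fun h w u v hu hv => (h w v u hv hu).imp fun _ => And.symm,
   fun h w u v hu hv => (h w v u hv hu).imp fun _ => And.symm⟩

lemma geach_valid_iff_geachConfluent (p q r s : ℕ) :
    (∀ φ : W → Prop, ∀ w : W, dian R p (boxn R q φ) w → boxn R r (dian R s φ) w) ↔
      GeachConfluent R p q r s := by
  constructor
  · intro h w u v hu hv
    have hw : dian R p (boxn R q (iterR R q u)) w :=
      (dian_iff R p _ w).2 ⟨u, hu, (boxn_iff R q _ u).2 fun _ => id⟩
    obtain ⟨x, hvx, hux⟩ := (dian_iff R s _ v).1 ((boxn_iff R r _ w).1 (h _ w hw) v hv)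
    exact ⟨x, hux, hvx⟩
  · intro h φ w hw
    obtain ⟨u, hu, hφ⟩ := (dian_iff R p _ w).1 hw
    refine (boxn_iff R r _ w).2 fun v hv => ?_
    obtain ⟨x, hux, hvx⟩ := h w u v hu hv
    exact (dian_iff R s φ v).2 ⟨x, hvx, (boxn_iff R q φ u).1 hφ x hux⟩

end

theorem geach_valid_iff_dual_general {W : Type*} (R : W → W → Prop)
    (p q r s : ℕ) :
    (∀ φ : W → Prop, ∀ w : W, dian R p (boxn R q φ) w → boxn R r (dian R s φ) w) ↔
      (∀ φ : W → Prop, ∀ w : W, dian R r (boxn R s φ) w → boxn R p (dian R q φ) w) := by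
  rw [geach_valid_iff_geachConfluent, geach_valid_iff_geachConfluent, geachConfluent_comm]

theorem geach_valid_iff_dual {W : Type*} [Nonempty W] (R : W → W → Prop)
    (p q r s : ℕ) :
    (∀ φ : W → Prop, ∀ w : W, dian R p (boxn R q φ) w → boxn R r (dian R s φ) w) ↔
      (∀ φ : W → Prop, ∀ w : W, dian R r (boxn R s φ) w → boxn R p (dian R q φ) w) :=
  geach_valid_iff_dual_general R p q r s
end

section
/- The rule NEC1 is sound: in any Kripke model, if the clauses (l'₁ ⇒ □_a ¬l₁), ..., (l'_m ⇒ □_a ¬l_m), (l' ⇒ ¬□_a l), and (⊤ ⇒ l₁ ∨ ... ∨ l_m ∨ l) all hold at every world, then (¬l'₁ ∨ ... ∨ ¬l'_m ∨ ¬l') holds at every world. -/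
theorem box_of_forall_box_not_of_forall_or {W ι : Type*} {R : W → W → Prop}
    {p : ι → W → Prop} {q : W → Prop} {w : W}
    (hp : ∀ i, box R (fun w' => ¬ p i w') w) (hcover : ∀ w', (∃ i, p i w') ∨ q w') :
    box R q w :=
  fun w' hR => (hcover w').resolve_left fun ⟨i, hi⟩ => hp i w' hR hi

theorem nec1_sound {W : Type*} (Ra : W → W → Prop) (m : ℕ)
    (l l' : W → Prop) (li li' : Fin m → W → Prop)
    (h1 : ∀ i : Fin m, ∀ w, li' i w → box Ra (fun w' => ¬ li i w') w)
    (h2 : ∀ w, l' w → ¬ box Ra l w)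
    (h3 : ∀ w, (∃ i : Fin m, li i w) ∨ l w) :
    ∀ w, (∃ i : Fin m, ¬ li' i w) ∨ ¬ l' w := by
  intro w
  by_contra! ⟨hli', hl'⟩
  exact h2 w hl' (box_of_forall_box_not_of_forall_or (fun i => h1 i w (hli' i)) h3)
end
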